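/- If P is an SSA of a CNF formula H with respect to AC-mapping Φ, then P is also an SSA of the CNF formula Φ(P) (the image of Φ); consequently the set of clauses Φ(P) is unsatisfiable, and every clause of H not in Φ(P) is redundant (H and Φ(P) are equisatisfiable, both unsatisfiable). -/
import Mathlib


open Function

abbrev Clause (V : Type*) := Finset (V × Bool)
abbrev CNF (V : Type*) := Set (Clause V)

def satLit {V : Type*} (p : V → Bool) (l : V × Bool) : Prop := p l.1 = l.2

def satClause {V : Type*} (p : V → Bool) (C : Clause V) : Prop := ∃ l ∈ C, satLit p l

def satCNF {V : Type*} (p : V → Bool) (H : CNF V) : Prop := ∀ C ∈ H, satClause p C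

def falsifies {V : Type*} (p : V → Bool) (C : Clause V) : Prop := ¬ satClause p C

/-- Hamming distance between two assignments. -/
def hdist {V : Type*} [Fintype V] [DecidableEq V] (p q : V → Bool) : ℕ :=
  (Finset.univ.filter fun v => p v ≠ q v).card

/-- The assignment obtained from `p` by flipping the value of variable `v`. -/
def flipAt {V : Type*} [DecidableEq V] (p : V → Bool) (v : V) : V → Bool :=
  Function.update p v (!p v)

/-- `Nbhd p C`: assignments at Hamming distance 1 from `p` satisfying `C`. -/
def Nbhd {V : Type*} [Fintype V] [DecidableEq V] (p : V → Bool) (C : Clause V) :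
    Set (V → Bool) :=
  {r | hdist p r = 1 ∧ satClause r C}

/-- `NbhdC q p C`: members of `Nbhd p C` strictly farther from `q` than `p` is. -/
def NbhdC {V : Type*} [Fintype V] [DecidableEq V] (q p : V → Bool) (C : Clause V) :
    Set (V → Bool) :=
  {r | hdist p r = 1 ∧ satClause r C ∧ hdist q r > hdist q p}

/-- `P` is a stable set of assignments (SSA) of `H` with center `pinit` and AC-mapping `Φ`. -/
def IsSSA {V : Type*} [Fintype V] [DecidableEq V] (H : CNF V) (P : Set (V → Bool))
    (pinit : V → Bool) (Φ : (V → Bool) → Clause V) : Prop :=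
  pinit ∈ P ∧ ∀ p ∈ P, Φ p ∈ H ∧ falsifies p (Φ p) ∧ NbhdC pinit p (Φ p) ⊆ P

lemma hdist_flip_self {V : Type*} [Fintype V] [DecidableEq V] (p : V → Bool) (v : V) :
    hdist p (flipAt p v) = 1 := by
  unfold hdist flipAt
  have : (Finset.univ.filter fun w => p w ≠ Function.update p v (!p v) w) = {v} := by
    ext w
    by_cases hw : w = v <;> simp [Function.update, hw]
  rw [this]; simp

lemma hdist_flip_of_eq {V : Type*} [Fintype V] [DecidableEq V] {p q : V → Bool} {v : V}
    (h : p v = q v) : hdist q (flipAt p v) = hdist q p + 1 := by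
  unfold hdist flipAt
  have : (Finset.univ.filter fun w => q w ≠ Function.update p v (!p v) w)
      = insert v (Finset.univ.filter fun w => q w ≠ p w) := by
    ext w
    by_cases hw : w = v <;> simp [Function.update, hw, ← h]
  rw [this, Finset.card_insert_of_notMem (by simp [h])]

lemma hdist_flip_of_ne {V : Type*} [Fintype V] [DecidableEq V] {p q : V → Bool} {v : V}
    (h : p v ≠ q v) : hdist q (flipAt p v) + 1 = hdist q p := by
  unfold hdist flipAt
  have hmem : v ∈ Finset.univ.filter fun w => q w ≠ p w := by
    simp [Ne.symm h]
  have : (Finset.univ.filter fun w => q w ≠ Function.update p v (!p v) w)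
      = (Finset.univ.filter fun w => q w ≠ p w).erase v := by
    ext w
    by_cases hw : w = v
    · subst hw
      cases hp : p w <;> cases hq : q w <;> simp_all [Function.update]
    · simp [Function.update, hw]
  rw [this, Finset.card_erase_of_mem hmem]
  exact Nat.succ_pred_eq_of_pos (Finset.card_pos.mpr ⟨v, hmem⟩)

lemma ssa_unsat {V : Type*} [Fintype V] [DecidableEq V]
    (H : CNF V) (P : Set (V → Bool)) (pinit : V → Bool)
    (Φ : (V → Bool) → Clause V) (h : IsSSA H P pinit Φ)
    (r : V → Bool) (hr : satCNF r (Φ '' P)) : False := by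
  suffices key : ∀ n, ∀ p ∈ P, (∀ w, p w = pinit w ∨ p w = r w) → hdist r p = n → False by
    exact key _ pinit h.1 (fun w => Or.inl rfl) rfl
  intro n
  induction n using Nat.strong_induction_on with
  | _ n ih =>
    intro p hp hbet hn
    obtain ⟨_, hfals, hnbhd⟩ := h.2 p hp
    obtain ⟨⟨v, b⟩, hl, hsat⟩ := hr (Φ p) ⟨p, hp, rfl⟩
    have hpl : ¬ satLit p (v, b) := fun hc => hfals ⟨(v, b), hl, hc⟩
    unfold satLit at hsat hpl
    simp only at hsat hpl
    have hpr : p v ≠ r v := by rw [hsat]; exact hpl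
    have hpin : p v = pinit v := (hbet v).resolve_right hpr
    have h1 : hdist p (flipAt p v) = 1 := hdist_flip_self p v
    have hflipv : flipAt p v v = !p v := by simp [flipAt]
    have hfvr : flipAt p v v = r v := by
      rw [hflipv]; revert hpr; cases p v <;> cases r v <;> simp
    have hsat' : satClause (flipAt p v) (Φ p) := by
      refine ⟨(v, b), hl, ?_⟩
      unfold satLit
      simp only
      rw [hfvr, hsat]
    have hfar : hdist pinit (flipAt p v) = hdist pinit p + 1 := hdist_flip_of_eq hpin
    have hp'P : flipAt p v ∈ P := hnbhd ⟨h1, hsat', by omega⟩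
    have hbet' : ∀ w, flipAt p v w = pinit w ∨ flipAt p v w = r w := by
      intro w
      by_cases hw : w = v
      · subst hw; exact Or.inr hfvr
      · have : flipAt p v w = p w := by simp [flipAt, Function.update, hw]
        rw [this]; exact hbet w
    have hd : hdist r (flipAt p v) + 1 = hdist r p := hdist_flip_of_ne hpr
    exact ih (hdist r (flipAt p v)) (by omega) (flipAt p v) hp'P hbet' rfl

/-- if `P` is an SSA of `H` w.r.t. `Φ`, then `P` is also an SSA of `Φ(P)`;
hence `Φ(P)` is unsatisfiable and `H` and `Φ(P)` are equisatisfiable (both unsatisfiable),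
so every clause of `H` outside `Φ(P)` is redundant. -/
theorem ssa_of_image {V : Type*} [Fintype V] [DecidableEq V]
    (H : CNF V) (P : Set (V → Bool)) (pinit : V → Bool)
    (Φ : (V → Bool) → Clause V) (h : IsSSA H P pinit Φ) :
    IsSSA (Φ '' P) P pinit Φ ∧
    (∀ p : V → Bool, ¬ satCNF p (Φ '' P)) ∧
    (∀ p : V → Bool, ¬ satCNF p H) := by
  refine ⟨⟨h.1, fun p hp => ⟨⟨p, hp, rfl⟩, (h.2 p hp).2⟩⟩,
    fun r hr => ssa_unsat H P pinit Φ h r hr, fun r hr => ?_⟩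
  apply ssa_unsat H P pinit Φ h r
  rintro C ⟨p, hp, rfl⟩
  exact hr (Φ p) (h.2 p hp).1
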